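/- arXiv:1809.00882 — 3 statements merged into one kernel-verified Lean document; each statement's English description precedes it below -/
import Mathlib

section
/- Let (μ_n) be a sequence of probability measures on ℝ, all with support contained in a fixed compact interval [a,b]. If for every k ∈ ℕ the moments m_k(μ_n) converge as n → ∞ to some limits m_k, then μ_n converges weakly to a probability measure μ with support in [a,b] and with m_k(μ) = m_k for all k. -/
/-!
By Prokhorov's theorem the probability measures carried by `[a, b]` form a compact metrizable
set, so a subsequence of `μ n` converges weakly to some `ν` carried by `[a, b]`. Since `x ^ k`
agrees on `[a, b]` with a bounded continuous function (Tietze), `ν` has the moments `m k`. Then the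
moments of the whole sequence converge to those of `ν`, hence so do integrals of polynomials, and
by Weierstrass approximation on `[a, b]` so do integrals of all bounded continuous functions.
-/

open MeasureTheory Filter Set Topology TopologicalSpace Polynomial BoundedContinuousFunction

theorem IsCompact.exists_boundedContinuousFunction_eqOn {E : Type*} [TopologicalSpace E]
    [T4Space E] {K : Set E} (hK : IsCompact K) {f : E → ℝ} (hf : ContinuousOn f K) :
    ∃ g : E →ᵇ ℝ, EqOn g f K := by
  have : CompactSpace K := isCompact_iff_compactSpace.mp hK
  obtain ⟨g, -, hg⟩ := exists_extension_norm_eq_of_isClosedEmbedding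
    (mkOfCompact ⟨K.domRestrict f, hf.domRestrict⟩) hK.isClosed.isClosedEmbedding_subtypeVal
  exact ⟨g, fun x hx => congrFun hg ⟨x, hx⟩⟩

section CompactSupport

variable {E : Type*} [MeasurableSpace E] {K : Set E}

theorem integral_congr_of_eqOn_of_measure_compl_eq_zero {μ : Measure E} (hμ : μ Kᶜ = 0)
    {f g : E → ℝ} (h : EqOn f g K) : ∫ x, f x ∂μ = ∫ x, g x ∂μ :=
  integral_congr_ae (h.eventuallyEq_of_mem (mem_ae_iff.2 hμ))

theorem abs_integral_sub_le_of_measure_compl_eq_zero {μ : Measure E} [IsProbabilityMeasure μ]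
    (hμ : μ Kᶜ = 0) {f g : E → ℝ} (hf : Integrable f μ) (hg : Integrable g μ) {ε : ℝ}
    (hfg : ∀ x ∈ K, |f x - g x| ≤ ε) : |∫ x, f x ∂μ - ∫ x, g x ∂μ| ≤ ε := by
  rw [← integral_sub hf hg]
  calc ‖∫ x, f x - g x ∂μ‖ ≤ ε * μ.real univ :=
        norm_integral_le_of_norm_le_const (Eventually.mono (mem_ae_iff.2 hμ) hfg)
    _ = ε := by simp

variable [TopologicalSpace E]

theorem integrable_of_continuousOn_of_measure_compl_eq_zero [T2Space E] [OpensMeasurableSpace E]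
    {μ : Measure E} [IsFiniteMeasure μ] (hK : IsCompact K) (hμ : μ Kᶜ = 0) {f : E → ℝ}
    (hf : ContinuousOn f K) : Integrable f μ := by
  rw [← Measure.restrict_eq_self_of_ae_mem (mem_ae_iff.2 hμ)]
  exact hf.integrableOn_compact hK

theorem tendsto_integral_of_continuousOn_of_measure_compl_eq_zero [T4Space E]
    {ι : Type*} {l : Filter ι} {μ : ι → Measure E} {ν : Measure E} (hK : IsCompact K)
    (hμ : ∀ i, μ i Kᶜ = 0) (hν : ν Kᶜ = 0)
    (hμν : ∀ g : E →ᵇ ℝ, Tendsto (fun i => ∫ x, g x ∂μ i) l (𝓝 (∫ x, g x ∂ν)))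
    {f : E → ℝ} (hf : ContinuousOn f K) :
    Tendsto (fun i => ∫ x, f x ∂μ i) l (𝓝 (∫ x, f x ∂ν)) := by
  obtain ⟨g, hg⟩ := hK.exists_boundedContinuousFunction_eqOn hf
  rw [← integral_congr_of_eqOn_of_measure_compl_eq_zero hν hg]
  simpa only [integral_congr_of_eqOn_of_measure_compl_eq_zero (hμ _) hg] using hμν g

theorem IsCompact.isCompact_setOf_probabilityMeasure_compl_eq_zero [T2Space E] [BorelSpace E]
    (hK : IsCompact K) : IsCompact {P : ProbabilityMeasure E | P Kᶜ = 0} := by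
  simpa only [Pi.zero_apply, nonpos_iff_eq_zero, forall_const] using
    isCompact_setOfPred_probabilityMeasure_mass_eq_compl_isCompact_le (u := 0) (K := fun _ => K)
      tendsto_const_nhds (fun _ => hK) (Or.inr monotone_const)

theorem exists_subseq_tendsto_integral_of_measure_compl_eq_zero [MetrizableSpace E]
    [SeparableSpace E] [BorelSpace E] (hK : IsCompact K) (μ : ℕ → Measure E)
    [∀ n, IsProbabilityMeasure (μ n)] (hμ : ∀ n, μ n Kᶜ = 0) :
    ∃ ν : Measure E, IsProbabilityMeasure ν ∧ ν Kᶜ = 0 ∧ ∃ φ : ℕ → ℕ, StrictMono φ ∧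
      ∀ g : E →ᵇ ℝ, Tendsto (fun n => ∫ x, g x ∂μ (φ n)) atTop (𝓝 (∫ x, g x ∂ν)) := by
  let P : ℕ → ProbabilityMeasure E := fun n => ⟨μ n, inferInstance⟩
  obtain ⟨ν, hνK, φ, hφ, hlim⟩ := hK.isCompact_setOf_probabilityMeasure_compl_eq_zero.tendsto_subseq
    (x := P) fun n => (ProbabilityMeasure.null_iff_toMeasure_null _ _).2 (hμ n)
  exact ⟨ν, inferInstance, (ProbabilityMeasure.null_iff_toMeasure_null _ _).1 hνK, φ, hφ,
    ProbabilityMeasure.tendsto_iff_forall_integral_tendsto.1 hlim⟩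

end CompactSupport

section Polynomial

variable {K : Set ℝ} {ι : Type*} {l : Filter ι}

theorem integral_eval_eq_sum_coeff_mul_moment {μ : Measure ℝ} [IsFiniteMeasure μ]
    (hK : IsCompact K) (hμ : μ Kᶜ = 0) (p : ℝ[X]) :
    ∫ x, p.eval x ∂μ = ∑ i ∈ Finset.range (p.natDegree + 1), p.coeff i * ∫ x, x ^ i ∂μ := by
  simp_rw [eval_eq_sum_range]
  rw [integral_finsetSum _ fun i _ => ((integrable_of_continuousOn_of_measure_compl_eq_zero hK hμ
    (continuous_pow i).continuousOn).const_mul _)]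
  simp only [integral_const_mul]

theorem tendsto_integral_eval_of_tendsto_moments {μ : ι → Measure ℝ} {ν : Measure ℝ}
    [∀ i, IsFiniteMeasure (μ i)] [IsFiniteMeasure ν] (hK : IsCompact K) (hμ : ∀ i, μ i Kᶜ = 0)
    (hν : ν Kᶜ = 0) (hmom : ∀ k : ℕ, Tendsto (fun i => ∫ x, x ^ k ∂μ i) l (𝓝 (∫ x, x ^ k ∂ν)))
    (p : ℝ[X]) : Tendsto (fun i => ∫ x, p.eval x ∂μ i) l (𝓝 (∫ x, p.eval x ∂ν)) := by
  simp only [integral_eval_eq_sum_coeff_mul_moment hK (hμ _),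
    integral_eval_eq_sum_coeff_mul_moment hK hν]
  exact tendsto_finsetSum _ fun k _ => (hmom k).const_mul _

theorem tendsto_integral_of_tendsto_integral_eval {a b : ℝ} {μ : ι → Measure ℝ} {ν : Measure ℝ}
    [∀ i, IsProbabilityMeasure (μ i)] [IsProbabilityMeasure ν] (hμ : ∀ i, μ i (Icc a b)ᶜ = 0)
    (hν : ν (Icc a b)ᶜ = 0)
    (hpoly : ∀ p : ℝ[X], Tendsto (fun i => ∫ x, p.eval x ∂μ i) l (𝓝 (∫ x, p.eval x ∂ν)))
    {f : ℝ → ℝ} (hf : ContinuousOn f (Icc a b)) :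
    Tendsto (fun i => ∫ x, f x ∂μ i) l (𝓝 (∫ x, f x ∂ν)) := by
  rw [Metric.tendsto_nhds]
  intro ε hε
  obtain ⟨p, hp⟩ := exists_polynomial_near_of_continuousOn a b f hf (ε / 3) (by positivity)
  have hclose (θ : Measure ℝ) [IsProbabilityMeasure θ] (hθ : θ (Icc a b)ᶜ = 0) :
      |∫ x, f x ∂θ - ∫ x, p.eval x ∂θ| ≤ ε / 3 :=
    abs_integral_sub_le_of_measure_compl_eq_zero hθ
      (integrable_of_continuousOn_of_measure_compl_eq_zero isCompact_Icc hθ hf)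
      (integrable_of_continuousOn_of_measure_compl_eq_zero isCompact_Icc hθ
        p.continuous.continuousOn)
      fun x hx => by rw [abs_sub_comm]; exact (hp x hx).le
  filter_upwards [Metric.tendsto_nhds.1 (hpoly p) (ε / 3) (by positivity)] with i hi
  rw [Real.dist_eq] at hi ⊢
  have hμ_close := abs_le.1 (hclose (μ i) (hμ i))
  have hν_close := abs_le.1 (hclose ν hν)
  rw [abs_lt] at hi ⊢
  constructor <;> linarith [hi.1, hi.2]

end Polynomial

/-- method of moments for measures with support in a fixed compact
interval: convergence of all moments implies weak convergence to a limit measure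
with support in [a,b] and the limiting moments. -/
theorem weak_convergence_of_moments (a b : ℝ) (μ : ℕ → Measure ℝ)
    (hprob : ∀ n, IsProbabilityMeasure (μ n))
    (hsupp : ∀ n, μ n (Set.Icc a b)ᶜ = 0)
    (m : ℕ → ℝ)
    (hmom : ∀ k : ℕ, Tendsto (fun n => ∫ x, x ^ k ∂(μ n)) atTop (nhds (m k))) :
    ∃ ν : Measure ℝ, IsProbabilityMeasure ν ∧ ν (Set.Icc a b)ᶜ = 0 ∧
      (∀ k : ℕ, ∫ x, x ^ k ∂ν = m k) ∧
      (∀ f : BoundedContinuousFunction ℝ ℝ,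
        Tendsto (fun n => ∫ x, f x ∂(μ n)) atTop (nhds (∫ x, f x ∂ν))) := by
  obtain ⟨ν, hνprob, hνsupp, φ, hφ, hsubseq⟩ :=
    exists_subseq_tendsto_integral_of_measure_compl_eq_zero isCompact_Icc μ hsupp
  have hmomν (k : ℕ) : ∫ x, x ^ k ∂ν = m k :=
    tendsto_nhds_unique (tendsto_integral_of_continuousOn_of_measure_compl_eq_zero isCompact_Icc
      (fun n => hsupp (φ n)) hνsupp hsubseq (continuous_pow k).continuousOn)
      ((hmom k).comp hφ.tendsto_atTop)
  refine ⟨ν, hνprob, hνsupp, hmomν, fun f => ?_⟩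
  refine tendsto_integral_of_tendsto_integral_eval hsupp hνsupp (fun p => ?_)
    f.continuous.continuousOn
  refine tendsto_integral_eval_of_tendsto_moments isCompact_Icc hsupp hνsupp (fun k => ?_) p
  simpa only [hmomν] using hmom k
end

section
/- Let (X_i)_{i∈ℕ} be an exchangeable sequence of {0,1}-valued random variables and let S_N = (1/N)·Σ_{i=1}^N X_i. Then for every k ∈ ℕ, E(S_N^k) → E(X_1·X_2·...·X_k) as N → ∞. -/
open MeasureTheory Finset Filter

def Exchangeable {Ω : Type*} [MeasurableSpace Ω] (P : Measure Ω) (X : ℕ → Ω → ℝ) : Prop :=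
  ∀ (N : ℕ) (σ : Equiv.Perm (Fin N)),
    Measure.map (fun ω (i : Fin N) => X (σ i) ω) P =
      Measure.map (fun ω (i : Fin N) => X i ω) P

/-! Expanding the power, `E(S_N^k) = N^{-k} ∑_{g : Fin k → Fin N} E(∏ᵢ X_{g i})`. By exchangeability
every injective `g` contributes exactly `E(X_1 ⋯ X_k)`, while each of the remaining
`N^k - N(N-1)⋯(N-k+1)` tuples is off by at most `2`, since `|X_i| ≤ 1`; the proportion of such
tuples tends to `0`. -/

theorem Equiv.Perm.exists_comp_eq_of_injective {α β : Type*} [Finite β] {f g : α → β}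
    (hf : Function.Injective f) (hg : Function.Injective g) :
    ∃ σ : Equiv.Perm β, σ ∘ f = g := by
  classical
  let e : Set.range f ≃ Set.range g := (Equiv.ofInjective f hf).symm.trans (Equiv.ofInjective g hg)
  refine ⟨e.extendSubtype, funext fun i => ?_⟩
  rw [Function.comp_apply, e.extendSubtype_apply_of_mem _ ⟨i, rfl⟩]
  simp [e, Equiv.ofInjective_symm_apply]

theorem Fin.card_filter_not_injective (k N : ℕ) :
    #{g : Fin k → Fin N | ¬Function.Injective g} = N ^ k - N.descFactorial k := by
  classical
  rw [filter_not, card_sdiff_of_subset (filter_subset _ _), card_univ, Fintype.card_fun,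
    Fintype.card_fin, Fintype.card_fin, ← Fintype.card_subtype,
    Fintype.card_congr (Equiv.subtypeInjectiveEquivEmbedding _ _), Fintype.card_embedding_eq,
    Fintype.card_fin, Fintype.card_fin]

theorem abs_sum_sub_pow_mul_le_of_injective_eq {k N : ℕ} {a : (Fin k → Fin N) → ℝ} {c B : ℝ}
    (hinj : ∀ g, Function.Injective g → a g = c) (hB : ∀ g, |a g - c| ≤ B) :
    |∑ g, a g - N ^ k * c| ≤ B * (N ^ k - N.descFactorial k) := by
  classical
  have hsum : ∑ g, a g - N ^ k * c = ∑ g with ¬Function.Injective g, (a g - c) := by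
    have hcard : ∑ _g : Fin k → Fin N, c = N ^ k * c := by simp
    rw [← hcard, ← sum_sub_distrib, ← sum_filter_not_add_sum_filter univ Function.Injective,
      sum_congr rfl fun g hg => sub_eq_zero.mpr (hinj g (mem_filter.mp hg).2), sum_const_zero,
      add_zero]
  calc |∑ g, a g - N ^ k * c| ≤ ∑ g with ¬Function.Injective g, |a g - c| := by
        rw [hsum]; exact abs_sum_le_sum_abs _ _
    _ ≤ #{g : Fin k → Fin N | ¬Function.Injective g} • B := sum_le_card_nsmul _ _ _ fun g _ => hB g
    _ = B * (N ^ k - N.descFactorial k) := by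
        rw [Fin.card_filter_not_injective, nsmul_eq_mul, mul_comm,
          Nat.cast_sub (Nat.descFactorial_le_pow N k)]
        push_cast; ring

theorem tendsto_descFactorial_div_pow (k : ℕ) :
    Tendsto (fun N : ℕ => (N.descFactorial k : ℝ) / N ^ k) atTop (nhds 1) := by
  refine ((Asymptotics.isEquivalent_iff_tendsto_one ?_).mp (isEquivalent_descFactorial k))
  filter_upwards [eventually_ge_atTop 1] with N hN
  positivity

theorem Finset.abs_prod_le_one {ι : Type*} {s : Finset ι} {f : ι → ℝ}
    (h : ∀ i ∈ s, |f i| ≤ 1) : |∏ i ∈ s, f i| ≤ 1 :=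
  (abs_prod _ _).trans_le (prod_le_one (fun _ _ => abs_nonneg _) h)

section BoundedProducts

variable {Ω ι : Type*} [MeasurableSpace Ω] {P : Measure Ω} {Y : ι → Ω → ℝ}

theorem integrable_prod_of_abs_le_one [IsFiniteMeasure P] (s : Finset ι)
    (hmeas : ∀ i, Measurable (Y i)) (hbdd : ∀ i ω, |Y i ω| ≤ 1) :
    Integrable (fun ω => ∏ i ∈ s, Y i ω) P :=
  .of_bound (Finset.measurable_prod _ fun i _ => hmeas i).aestronglyMeasurable 1
    (ae_of_all _ fun ω => (Real.norm_eq_abs _).trans_le (abs_prod_le_one fun i _ => hbdd i ω))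

theorem abs_integral_prod_le_one [IsProbabilityMeasure P] (s : Finset ι)
    (hbdd : ∀ i ω, |Y i ω| ≤ 1) :
    |∫ ω, ∏ i ∈ s, Y i ω ∂P| ≤ 1 := by
  simpa using norm_integral_le_of_norm_le_const (μ := P)
    (ae_of_all _ fun ω => (Real.norm_eq_abs _).trans_le (abs_prod_le_one fun i _ => hbdd i ω))

end BoundedProducts

theorem integral_average_pow_eq {Ω : Type*} [MeasurableSpace Ω] {P : Measure Ω}
    {X : ℕ → Ω → ℝ} {k N : ℕ}
    (hint : ∀ g : Fin k → Fin N, Integrable (fun ω => ∏ i, X (g i) ω) P) :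
    ∫ ω, ((N : ℝ)⁻¹ * ∑ i ∈ range N, X i ω) ^ k ∂P =
      ((N : ℝ) ^ k)⁻¹ * ∑ g : Fin k → Fin N, ∫ ω, ∏ i, X (g i) ω ∂P := by
  simp_rw [mul_pow, inv_pow, ← Fin.sum_univ_eq_sum_range, Fintype.sum_pow]
  rw [integral_const_mul, integral_finsetSum _ fun g _ => hint g]

namespace Exchangeable

variable {Ω : Type*} [MeasurableSpace Ω] {P : Measure Ω} {X : ℕ → Ω → ℝ}

theorem integral_comp_perm (hexch : Exchangeable P X) (hmeas : ∀ i, Measurable (X i)) {N : ℕ}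
    (σ : Equiv.Perm (Fin N)) {F : (Fin N → ℝ) → ℝ} (hF : Measurable F) :
    ∫ ω, F (fun i => X (σ i) ω) ∂P = ∫ ω, F (fun i => X i ω) ∂P := by
  have hmeas_vec : ∀ τ : Fin N → Fin N, Measurable (fun ω (i : Fin N) => X (τ i) ω) :=
    fun τ => measurable_pi_lambda _ fun i => hmeas _
  have h := congrArg (fun μ => ∫ y, F y ∂μ) (hexch N σ)
  rwa [integral_map (hmeas_vec σ).aemeasurable hF.aestronglyMeasurable,
    integral_map (hmeas_vec fun i => i).aemeasurable hF.aestronglyMeasurable] at h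

theorem integral_prod_comp_injective (hexch : Exchangeable P X) (hmeas : ∀ i, Measurable (X i))
    {k N : ℕ} {g : Fin k → Fin N} (hg : Function.Injective g) :
    ∫ ω, ∏ i, X (g i) ω ∂P = ∫ ω, ∏ i ∈ range k, X i ω ∂P := by
  have hkN : k ≤ N := by simpa using Fintype.card_le_of_injective g hg
  obtain ⟨σ, hσ⟩ :=
    Equiv.Perm.exists_comp_eq_of_injective (Fin.castLE_injective hkN) hg
  have hF : Measurable fun y : Fin N → ℝ => ∏ i : Fin k, y (Fin.castLE hkN i) :=
    Finset.measurable_prod _ fun i _ => measurable_pi_apply _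
  have h := hexch.integral_comp_perm hmeas σ hF
  simp only [show ∀ i, σ (Fin.castLE hkN i) = g i from congrFun hσ] at h
  simpa [← Fin.prod_univ_eq_prod_range] using h

theorem abs_integral_average_pow_sub_le [IsProbabilityMeasure P] (hexch : Exchangeable P X)
    (hmeas : ∀ i, Measurable (X i)) (hbdd : ∀ i ω, |X i ω| ≤ 1) (k : ℕ) {N : ℕ} (hN : 0 < N) :
    |∫ ω, ((N : ℝ)⁻¹ * ∑ i ∈ range N, X i ω) ^ k ∂P - ∫ ω, ∏ i ∈ range k, X i ω ∂P| ≤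
      2 * (1 - N.descFactorial k / (N : ℝ) ^ k) := by
  set c := ∫ ω, ∏ i ∈ range k, X i ω ∂P
  have hNk : (0 : ℝ) < (N : ℝ) ^ k := by positivity
  have hdiff : ∀ g : Fin k → Fin N, |∫ ω, ∏ i, X (g i) ω ∂P - c| ≤ 2 := fun g => by
    linarith [abs_sub (∫ ω, ∏ i, X (g i) ω ∂P) c, abs_integral_prod_le_one (P := P) univ
      fun i => hbdd (g i), abs_integral_prod_le_one (P := P) (range k) hbdd]
  have hsum := abs_sum_sub_pow_mul_le_of_injective_eq
    (fun g hg => hexch.integral_prod_comp_injective hmeas hg) hdiff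
  rw [integral_average_pow_eq fun g =>
    integrable_prod_of_abs_le_one _ (fun i => hmeas (g i)) fun i => hbdd (g i)]
  calc |((N : ℝ) ^ k)⁻¹ * ∑ g : Fin k → Fin N, ∫ ω, ∏ i, X (g i) ω ∂P - c|
      = ((N : ℝ) ^ k)⁻¹ * |∑ g : Fin k → Fin N, ∫ ω, ∏ i, X (g i) ω ∂P - N ^ k * c| := by
        rw [← abs_of_pos (inv_pos.mpr hNk), ← abs_mul, abs_of_pos (inv_pos.mpr hNk), mul_sub,
          inv_mul_cancel_left₀ hNk.ne']
    _ ≤ ((N : ℝ) ^ k)⁻¹ * (2 * (N ^ k - N.descFactorial k)) := by gcongr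
    _ = 2 * (1 - N.descFactorial k / (N : ℝ) ^ k) := by field_simp

end Exchangeable

/-- for an exchangeable {0,1}-valued sequence, the k-th moment of
S_N = (1/N)·Σ_{i<N} X_i converges to E(X_1 ⋯ X_k). -/
theorem moments_of_average_tendsto {Ω : Type*} [MeasurableSpace Ω]
    (P : Measure Ω) [IsProbabilityMeasure P] (X : ℕ → Ω → ℝ)
    (hmeas : ∀ i, Measurable (X i))
    (hval : ∀ i ω, X i ω = 0 ∨ X i ω = 1)
    (hexch : Exchangeable P X) (k : ℕ) :
    Tendsto (fun N : ℕ => ∫ ω, ((N : ℝ)⁻¹ * ∑ i ∈ Finset.range N, X i ω) ^ k ∂P)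
      atTop (nhds (∫ ω, ∏ i ∈ Finset.range k, X i ω ∂P)) := by
  have hbdd : ∀ i ω, |X i ω| ≤ 1 := fun i ω => by rcases hval i ω with h | h <;> simp [h]
  have hbound :
      Tendsto (fun N : ℕ => 2 * (1 - N.descFactorial k / (N : ℝ) ^ k)) atTop (nhds 0) := by
    simpa using ((tendsto_descFactorial_div_pow k).const_sub 1).const_mul 2
  rw [tendsto_iff_norm_sub_tendsto_zero]
  exact squeeze_zero' (.of_forall fun N => norm_nonneg _)
    ((eventually_gt_atTop 0).mono fun _ hN => hexch.abs_integral_average_pow_sub_le hmeas hbdd k hN)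
    hbound
end

section
/- Let (X_i)_{i∈ℕ} be an exchangeable sequence of {0,1}-valued random variables with de Finetti measure μ (the weak limit of the laws of (1/N)Σ_{i=1}^N X_i), and let (Y_i) be the μ-mixture of i.i.d. Bernoulli sequences. Then for every N and k, E((Σ_{i=1}^N X_i)^k) = E((Σ_{i=1}^N Y_i)^k). -/
open MeasureTheory Finset

def IsBernoulliMixture {Ω : Type*} [MeasurableSpace Ω] (P : Measure Ω)
    (Y : ℕ → Ω → ℝ) (μ : Measure ℝ) : Prop :=
  ∀ (k : ℕ) (y : Fin k → ℝ), (∀ j, y j = 0 ∨ y j = 1) →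
    P {ω | ∀ j : Fin k, Y j.val ω = y j}
      = ENNReal.ofReal (∫ p, ∏ j, (if y j = 1 then p else 1 - p) ∂μ)

/-!
Because the variables take values in `{0, 1}`, expanding `(∑_{i<N} X_i)^k` and collapsing repeated
factors writes the `k`-th moment as a sum of `E ∏_{i∈S} X_i` over finite sets `S`, and likewise for
`Y`; so it suffices that `E ∏_{i∈S} X_i = ∫ p^|S| dμ = E ∏_{i∈S} Y_i`. For `X` this is
exchangeability: `E ∏_{i∈S} X_i = E[X_0 ⋯ X_{|S|-1}]`. For `Y`, the product `∏_{i∈S} Y_i` is the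
sum of the indicators of the cylinders `{Y_j = y_j, j < m}` with `y = 1` on `S`, whose
probabilities are `∫ ∏_j p^{y_j} (1-p)^{1-y_j} dμ`; the same expansion with every `Y_j` replaced
by `p` sums to `p^|S|`.
-/

section Algebra

variable {ι R : Type*}

theorem sum_pow_eq_sum_prod_image [CommSemiring R] [DecidableEq ι] {z : ι → R}
    (hz : ∀ i, IsIdempotentElem (z i)) (s : Finset ι) (k : ℕ) :
    (∑ i ∈ s, z i) ^ k = ∑ g ∈ Fintype.piFinset fun _ : Fin k => s, ∏ i ∈ univ.image g, z i := by
  rw [← Fin.prod_const k, prod_univ_sum]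
  refine sum_congr rfl fun g _ => ?_
  rw [prod_comp]
  refine prod_congr rfl fun i hi => (hz i).pow_eq ?_
  obtain ⟨j, -, rfl⟩ := mem_image.1 hi
  exact card_ne_zero_of_mem (mem_filter.2 ⟨mem_univ j, rfl⟩)

theorem prod_eq_sum_prod_ite_one_sub [CommRing R] [DecidableEq ι] (f : ι → R) {S s : Finset ι}
    (hS : S ⊆ s) :
    ∏ i ∈ S, f i = ∑ t ∈ s.powerset with S ⊆ t, ∏ j ∈ s, if j ∈ t then f j else 1 - f j := by
  -- expand `∏ j ∈ s, (f j + [j ∉ S] (1 - f j))`; the terms with `S ⊄ t` vanish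
  have hsplit := prod_add f (fun j => if j ∈ S then 0 else 1 - f j) s
  have hfactor : ∀ j, f j + (if j ∈ S then 0 else 1 - f j) = if j ∈ S then f j else 1 := fun j => by
    split_ifs <;> ring
  simp only [hfactor, prod_ite_mem, inter_eq_right.2 hS] at hsplit
  rw [hsplit, sum_filter]
  refine sum_congr rfl fun t ht => ?_
  rw [mem_powerset] at ht
  split_ifs with hSt
  · rw [prod_congr rfl fun j hj => if_neg fun hjS => (mem_sdiff.1 hj).2 (hSt hjS), prod_ite,
      filter_mem_eq_inter, inter_eq_right.2 ht, ← sdiff_eq_filter]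
  · obtain ⟨j, hjS, hjt⟩ := not_subset.1 hSt
    exact mul_eq_zero_of_right _ (prod_eq_zero (mem_sdiff.2 ⟨hS hjS, hjt⟩) (if_pos hjS))

theorem ite_one_sub_eq_ite_eq [Ring R] [Nontrivial R] [DecidableEq R] {z : R}
    (hz : z = 0 ∨ z = 1) (c : Prop) [Decidable c] :
    (if c then z else 1 - z) = if z = (if c then 1 else 0) then 1 else 0 := by
  rcases hz with rfl | rfl <;> split_ifs <;> simp_all

theorem mem_unitInterval_of_eq_zero_or_eq_one {z : ℝ} (hz : z = 0 ∨ z = 1) :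
    z ∈ unitInterval := by
  rcases hz with rfl | rfl
  exacts [unitInterval.zero_mem, unitInterval.one_mem]

theorem prod_ite_one_sub_mem_unitInterval [DecidableEq ι] {f : ι → ℝ} {s : Finset ι}
    (hf : ∀ j ∈ s, f j ∈ unitInterval) (t : Finset ι) :
    ∏ j ∈ s, (if j ∈ t then f j else 1 - f j) ∈ unitInterval :=
  unitInterval.prod_mem fun j hj => by
    split_ifs
    exacts [hf j hj, Set.Icc.mem_iff_one_sub_mem.1 (hf j hj)]

end Algebra

section Integrals

variable {ι α : Type*} [MeasurableSpace α] {ν : Measure α} [IsFiniteMeasure ν]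

theorem integrable_of_ae_mem_unitInterval {f : α → ℝ} (hf : AEStronglyMeasurable f ν)
    (h01 : ∀ᵐ x ∂ν, f x ∈ unitInterval) : Integrable f ν :=
  .of_bound hf 1 <| h01.mono fun _ hx => by
    rw [Real.norm_eq_abs, abs_le]
    constructor <;> linarith [hx.1, hx.2]

theorem integral_sum_pow_eq_sum_integral_prod [DecidableEq ι] {Z : ι → α → ℝ}
    (hZ : ∀ i, Measurable (Z i)) (hZ01 : ∀ i x, Z i x = 0 ∨ Z i x = 1) (s : Finset ι) (k : ℕ) :
    ∫ x, (∑ i ∈ s, Z i x) ^ k ∂ν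
      = ∑ g ∈ Fintype.piFinset fun _ : Fin k => s, ∫ x, ∏ i ∈ univ.image g, Z i x ∂ν := by
  simp_rw [sum_pow_eq_sum_prod_image (fun i => IsIdempotentElem.iff_eq_zero_or_one.2 (hZ01 i _))]
  refine integral_finsetSum _ fun g _ => integrable_of_ae_mem_unitInterval ?_ (ae_of_all _ ?_)
  · exact (Finset.measurable_prod _ fun i _ => hZ i).aestronglyMeasurable
  · exact fun x => unitInterval.prod_mem fun i _ =>
      mem_unitInterval_of_eq_zero_or_eq_one (hZ01 i x)

end Integrals

namespace Exchangeable

variable {Ω : Type*} [MeasurableSpace Ω] {P : Measure Ω} {X : ℕ → Ω → ℝ}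

theorem integral_comp_of_injective (hexch : Exchangeable P X) (hX : ∀ i, Measurable (X i))
    {n : ℕ} {f : Fin n → ℕ} (hf : f.Injective) {g : (Fin n → ℝ) → ℝ} (hg : Measurable g) :
    ∫ ω, g (fun i => X (f i) ω) ∂P = ∫ ω, g (fun i => X i ω) ∂P := by
  obtain ⟨m, hnm, hfm⟩ : ∃ m, n ≤ m ∧ ∀ i, f i < m :=
    ⟨n + univ.sup f + 1, by omega, fun i => by have := le_sup (f := f) (mem_univ i); omega⟩
  obtain ⟨σ, hσ⟩ := Equiv.Perm.exists_extending_pair (Fin.castLE hnm) (fun i => ⟨f i, hfm i⟩)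
    (Fin.castLE_injective hnm) fun i j hij => hf (Fin.mk.inj_iff.1 hij)
  have hG : Measurable fun v : Fin m → ℝ => g fun i => v (Fin.castLE hnm i) :=
    hg.comp (measurable_pi_lambda _ fun i => measurable_pi_apply _)
  have hXm (τ : Fin m → ℕ) : Measurable fun ω (j : Fin m) => X (τ j) ω :=
    measurable_pi_lambda _ fun j => hX _
  have h := congrArg (fun ρ => ∫ v, g (fun i => v (Fin.castLE hnm i)) ∂ρ) (hexch m σ)
  simpa only [integral_map (hXm _).aemeasurable hG.aestronglyMeasurable, hσ,
    Fin.val_castLE] using h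

theorem integral_prod_eq_integral_prod_range (hexch : Exchangeable P X)
    (hX : ∀ i, Measurable (X i)) (S : Finset ℕ) :
    ∫ ω, ∏ i ∈ S, X i ω ∂P = ∫ ω, ∏ i ∈ range #S, X i ω ∂P := by
  have h := hexch.integral_comp_of_injective hX
    (Subtype.val_injective.comp S.equivFin.symm.injective)
    (Finset.measurable_prod univ fun i _ => measurable_pi_apply i)
  simp only [Function.comp_apply] at h
  convert h using 3 with ω ω
  · rw [← prod_coe_sort S, ← S.equivFin.symm.prod_comp]
  · exact (Fin.prod_univ_eq_prod_range (fun i => X i ω) _).symm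

end Exchangeable

namespace IsBernoulliMixture

variable {Ω : Type*} [MeasurableSpace Ω] {Q : Measure Ω} {Y : ℕ → Ω → ℝ} {μ : Measure ℝ}

theorem integral_prod_ite_one_sub (hmix : IsBernoulliMixture Q Y μ) (hY : ∀ i, Measurable (Y i))
    (hY01 : ∀ i ω, Y i ω = 0 ∨ Y i ω = 1) (hμ : ∀ᵐ p ∂μ, p ∈ unitInterval) (m : ℕ)
    (t : Finset ℕ) :
    ∫ ω, ∏ j ∈ range m, (if j ∈ t then Y j ω else 1 - Y j ω) ∂Q
      = ∫ p, ∏ j ∈ range m, (if j ∈ t then p else 1 - p) ∂μ := by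
  set y : Fin m → ℝ := fun j => if ↑j ∈ t then 1 else 0
  set A := {ω | ∀ j : Fin m, Y j ω = y j}
  have hA : MeasurableSet A := by
    simp only [A, Set.ofPred_forall]
    exact .iInter fun j => measurableSet_eq_fun (hY j) measurable_const
  have hind : ∀ ω, ∏ j ∈ range m, (if j ∈ t then Y j ω else 1 - Y j ω) = A.indicator 1 ω := by
    intro ω
    rw [← Fin.prod_univ_eq_prod_range (fun j => if j ∈ t then Y j ω else 1 - Y j ω)]
    simp_rw [ite_one_sub_eq_ite_eq (hY01 _ ω)]
    rw [Fintype.prod_boole, Set.indicator_apply]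
    simp only [A, y, Set.mem_ofPred_eq, Pi.one_apply]
    congr 1
  have hcyl : ∀ p : ℝ, ∏ j, (if y j = 1 then p else 1 - p)
      = ∏ j ∈ range m, (if j ∈ t then p else 1 - p) := fun p => by
    rw [← Fin.prod_univ_eq_prod_range (fun j => if j ∈ t then p else 1 - p)]
    refine prod_congr rfl fun j _ => ?_
    by_cases hj : ↑j ∈ t <;> simp [y, hj]
  have hnonneg : 0 ≤ ∫ p, ∏ j ∈ range m, (if j ∈ t then p else 1 - p) ∂μ :=
    integral_nonneg_of_ae <| hμ.mono fun p hp =>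
      (prod_ite_one_sub_mem_unitInterval (fun _ _ => hp) t).1
  have hy01 : ∀ j, y j = 0 ∨ y j = 1 := fun j => by by_cases hj : ↑j ∈ t <;> simp [y, hj]
  calc ∫ ω, ∏ j ∈ range m, (if j ∈ t then Y j ω else 1 - Y j ω) ∂Q
      = Q.real A := by simp_rw [hind]; exact integral_indicator_one hA
    _ = ∫ p, ∏ j ∈ range m, (if j ∈ t then p else 1 - p) ∂μ := by
      rw [measureReal_def, hmix m y hy01]
      simp_rw [hcyl]
      exact ENNReal.toReal_ofReal hnonneg

theorem integral_prod_eq_integral_pow_card [IsFiniteMeasure Q] [IsFiniteMeasure μ]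
    (hmix : IsBernoulliMixture Q Y μ) (hY : ∀ i, Measurable (Y i))
    (hY01 : ∀ i ω, Y i ω = 0 ∨ Y i ω = 1)
    (hμ : ∀ᵐ p ∂μ, p ∈ unitInterval) (S : Finset ℕ) :
    ∫ ω, ∏ i ∈ S, Y i ω ∂Q = ∫ p, p ^ #S ∂μ := by
  obtain ⟨m, hSm⟩ := S.exists_nat_subset_range
  have hintQ (t : Finset ℕ) :
      Integrable (fun ω => ∏ j ∈ range m, if j ∈ t then Y j ω else 1 - Y j ω) Q := by
    refine integrable_of_ae_mem_unitInterval ?_ (ae_of_all _ fun ω =>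
      prod_ite_one_sub_mem_unitInterval
        (fun j _ => mem_unitInterval_of_eq_zero_or_eq_one (hY01 j ω)) t)
    refine (Finset.measurable_prod _ fun j _ => ?_).aestronglyMeasurable
    split_ifs
    exacts [hY j, measurable_const.sub (hY j)]
  have hintμ (t : Finset ℕ) :
      Integrable (fun p : ℝ => ∏ j ∈ range m, if j ∈ t then p else 1 - p) μ := by
    refine integrable_of_ae_mem_unitInterval ?_ (hμ.mono fun p hp =>
      prod_ite_one_sub_mem_unitInterval (fun _ _ => hp) t)
    refine (Finset.measurable_prod _ fun j _ => ?_).aestronglyMeasurable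
    split_ifs
    exacts [measurable_id, measurable_const.sub measurable_id]
  calc ∫ ω, ∏ i ∈ S, Y i ω ∂Q
      = ∑ t ∈ (range m).powerset with S ⊆ t,
          ∫ ω, ∏ j ∈ range m, (if j ∈ t then Y j ω else 1 - Y j ω) ∂Q := by
        simp_rw [prod_eq_sum_prod_ite_one_sub _ hSm]
        exact integral_finsetSum _ fun t _ => hintQ t
    _ = ∑ t ∈ (range m).powerset with S ⊆ t,
          ∫ p, ∏ j ∈ range m, (if j ∈ t then p else 1 - p) ∂μ :=
        sum_congr rfl fun t _ => hmix.integral_prod_ite_one_sub hY hY01 hμ m t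
    _ = ∫ p, ∏ _i ∈ S, p ∂μ := by
        simp_rw [prod_eq_sum_prod_ite_one_sub (fun _ => _) hSm]
        exact (integral_finsetSum _ fun t _ => hintμ t).symm
    _ = ∫ p, p ^ #S ∂μ := by simp_rw [prod_const]

end IsBernoulliMixture

/-- if μ is the de Finetti measure of X (i.e. the probability measure
on [0,1] with moments m_k(μ) = E(X_1 ⋯ X_k)) and Y is the μ-mixture of i.i.d.
Bernoulli sequences, then Σ_{i<N} X_i and Σ_{i<N} Y_i have the same moments. -/
theorem sum_moments_eq_of_deFinetti {Ω Ω' : Type*} [MeasurableSpace Ω] [MeasurableSpace Ω']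
    (P : Measure Ω) [IsProbabilityMeasure P] (Q : Measure Ω') [IsProbabilityMeasure Q]
    (X : ℕ → Ω → ℝ) (hXmeas : ∀ i, Measurable (X i))
    (hXval : ∀ i ω, X i ω = 0 ∨ X i ω = 1) (hexch : Exchangeable P X)
    (μ : Measure ℝ) [IsProbabilityMeasure μ] (hsupp : μ (Set.Icc 0 1)ᶜ = 0)
    (hμ : ∀ k : ℕ, ∫ p, p ^ k ∂μ = ∫ ω, ∏ i ∈ Finset.range k, X i ω ∂P)
    (Y : ℕ → Ω' → ℝ) (hYmeas : ∀ i, Measurable (Y i))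
    (hYval : ∀ i ω, Y i ω = 0 ∨ Y i ω = 1)
    (hmix : IsBernoulliMixture Q Y μ) (N k : ℕ) :
    ∫ ω, (∑ i ∈ Finset.range N, X i ω) ^ k ∂P
      = ∫ ω', (∑ i ∈ Finset.range N, Y i ω') ^ k ∂Q := by
  have hX (S : Finset ℕ) : ∫ ω, ∏ i ∈ S, X i ω ∂P = ∫ p, p ^ #S ∂μ := by
    rw [hexch.integral_prod_eq_integral_prod_range hXmeas, hμ]
  have hY (S : Finset ℕ) : ∫ ω', ∏ i ∈ S, Y i ω' ∂Q = ∫ p, p ^ #S ∂μ :=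
    hmix.integral_prod_eq_integral_pow_card hYmeas hYval (mem_ae_iff.2 hsupp) S
  simp only [integral_sum_pow_eq_sum_integral_prod hXmeas hXval,
    integral_sum_pow_eq_sum_integral_prod hYmeas hYval, hX, hY]
end
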